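/- arXiv:1606.07288 — 2 statements merged into one kernel-verified Lean document; each statement's English description precedes it below -/
import Mathlib

section
/- Let S = (P, L, I) be a generalized 2d-gon, let j with 2 ≤ j ≤ d be odd, and let O be a set of points. Then O is a distance-j ovoid of S if and only if for every point p there is exactly one point x ∈ O with d(x, p) ≤ (j − 1)/2. -/
/-!
Write `j = 2m + 1`. In a connected graph, points of `O` are pairwise at distance at least `j`
iff the balls of radius `m` around them are disjoint: one way by the triangle inequality, the other
by taking a vertex at distance `m` along a geodesic between two close points of `O`. The covering
condition `2 d(a, O) ≤ j` says exactly that these balls cover. The point graph of a generalized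
polygon is connected since its incidence graph has finite diameter, and the condition on lines
follows from the one on points, applied to any point of the line.
-/

open SimpleGraph
section Geometry

variable {P L : Type*}

/-- The adjacency relation of the incidence graph of a point-line geometry. -/
def IncAdj (I : P → L → Prop) : P ⊕ L → P ⊕ L → Prop
  | Sum.inl p, Sum.inr l => I p l
  | Sum.inr l, Sum.inl p => I p l
  | _, _ => False

/-- The incidence graph of a point-line geometry: vertices are points and lines,
a point is adjacent to a line iff they are incident. -/
def incidenceGraph (I : P → L → Prop) : SimpleGraph (P ⊕ L) where
  Adj := IncAdj I
  symm := ⟨by intro a b h; cases a <;> cases b <;> simp_all [IncAdj]⟩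
  loopless := ⟨by intro a h; cases a <;> simp_all [IncAdj]⟩

/-- The point graph of a point-line geometry: distinct points are adjacent iff they
are incident with a common line. -/
def pointGraph (I : P → L → Prop) : SimpleGraph P where
  Adj x y := x ≠ y ∧ ∃ l, I x l ∧ I y l
  symm := ⟨by rintro x y ⟨h, l, hx, hy⟩; exact ⟨h.symm, l, hy, hx⟩⟩
  loopless := ⟨by rintro x ⟨h, -⟩; exact h rfl⟩

/-- Distance from a point to a line: the minimum point-graph distance from `x`
to a point incident with `l`. -/
noncomputable def distPL (I : P → L → Prop) (x : P) (l : L) : ℕ :=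
  sInf ((pointGraph I).dist x '' {y | I y l})

/-- Distance between two lines: the minimum point-graph distance between a point of `l`
and a point of `l'`. -/
noncomputable def distLL (I : P → L → Prop) (l l' : L) : ℕ :=
  sInf {n | ∃ x y, I x l ∧ I y l' ∧ (pointGraph I).dist x y = n}

/-- A generalized `n`-gon of order `(s, t)`: every line has `s + 1` points, every point is
on `t + 1` lines, and the incidence graph has diameter `n` and girth `2 * n`. -/
structure IsGenPolygon (I : P → L → Prop) (n s t : ℕ) : Prop where
  pts_nonempty : Nonempty P
  line_card : ∀ l : L, {p : P | I p l}.ncard = s + 1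
  point_card : ∀ p : P, {l : L | I p l}.ncard = t + 1
  ediam_eq : (incidenceGraph I).ediam = n
  egirth_eq : (incidenceGraph I).egirth = 2 * n

/-- A subhexagon of order `(s, t')` of a generalized hexagon. -/
def IsSubhexagon (I : P → L → Prop) (s t' : ℕ) (P' : Set P) (L' : Set L) : Prop :=
  (∀ p : P, ∀ l ∈ L', I p l → p ∈ P') ∧
  IsGenPolygon (fun (p : P') (l : L') => I p.1 l.1) 6 s t'

/-- A distance-`j` ovoid of a generalized `2d`-gon (in terms of the point graph). -/
def IsDistanceOvoid (I : P → L → Prop) (j : ℕ) (O : Set P) : Prop :=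
  (∀ x ∈ O, ∀ y ∈ O, x ≠ y → j ≤ (pointGraph I).dist x y) ∧
  (∀ a : P, ∃ x ∈ O, 2 * (pointGraph I).dist a x ≤ j) ∧
  (∀ l : L, ∃ x ∈ O, 2 * distPL I x l ≤ j - 1)

end Geometry

namespace SimpleGraph

variable {V : Type*} {G : SimpleGraph V}

theorem Reachable.exists_dist_le_and_dist_le_sub {x y : V} (h : G.Reachable x y) (k : ℕ) :
    ∃ p, G.dist x p ≤ k ∧ G.dist p y ≤ G.dist x y - k := by
  obtain ⟨w, hw⟩ := h.exists_walk_length_eq_dist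
  exact ⟨w.getVert k, (dist_le (w.take k)).trans (by simp),
    (dist_le (w.drop k)).trans (by simp [hw])⟩

theorem Connected.packing_and_covering_iff_existsUnique (hG : G.Connected) (m : ℕ) (O : Set V) :
    ((∀ x ∈ O, ∀ y ∈ O, x ≠ y → 2 * m + 1 ≤ G.dist x y) ∧
        ∀ a, ∃ x ∈ O, 2 * G.dist a x ≤ 2 * m + 1) ↔
      ∀ p, ∃! x, x ∈ O ∧ G.dist x p ≤ m := by
  constructor
  · rintro ⟨hpack, hcover⟩ p
    obtain ⟨x, hxO, hpx⟩ := hcover p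
    refine ⟨x, ⟨hxO, by rw [dist_comm]; omega⟩, ?_⟩
    rintro y ⟨hyO, hyp⟩
    by_contra hyx
    have hfar := hpack y hyO x hxO hyx
    have htri := hG.dist_triangle (u := y) (v := p) (w := x)
    omega
  · intro hcenter
    refine ⟨fun x hxO y hyO hxy => ?_, fun a => ?_⟩
    · by_contra! hlt
      obtain ⟨p, hxp, hpy⟩ := (hG.preconnected x y).exists_dist_le_and_dist_le_sub m
      obtain ⟨z, -, hz⟩ := hcenter p
      exact hxy ((hz x ⟨hxO, hxp⟩).trans (hz y ⟨hyO, by rw [dist_comm]; omega⟩).symm)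
    · obtain ⟨x, ⟨hxO, hxa⟩, -⟩ := hcenter a
      exact ⟨x, hxO, by rw [dist_comm]; omega⟩

end SimpleGraph

section Geometry

variable {P L : Type*} {I : P → L → Prop}

theorem pointGraph_reachable_of_incident {b c : P} {l : L} (hb : I b l) (hc : I c l) :
    (pointGraph I).Reachable b c := by
  by_cases hbc : b = c
  · exact hbc ▸ .refl b
  · exact Adj.reachable ⟨hbc, l, hb, hc⟩

theorem pointGraph_reachable_of_incidenceGraph_reachable {a b : P}
    (h : (incidenceGraph I).Reachable (.inl a) (.inl b)) : (pointGraph I).Reachable a b := by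
  rw [reachable_iff_reflTransGen] at h
  -- `Sum.elim (c = ·) (I c ·) v`: the point `c` is the vertex `v`, or lies on the line `v`.
  suffices ∀ v, Relation.ReflTransGen (incidenceGraph I).Adj (.inl a) v →
      ∃ c, Sum.elim (c = ·) (I c ·) v ∧ (pointGraph I).Reachable a c by
    obtain ⟨c, rfl, hc⟩ := this _ h
    exact hc
  intro v hv
  induction hv with
  | refl => exact ⟨a, rfl, .refl a⟩
  | @tail u w _ hadj ih =>
    obtain ⟨c, hc, hac⟩ := ih
    rcases u with c' | l <;> rcases w with c'' | l' <;>
      simp only [incidenceGraph, IncAdj, Sum.elim_inl, Sum.elim_inr] at hadj hc ⊢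
    · exact ⟨c, hc ▸ hadj, hac⟩
    · exact ⟨c'', rfl, hac.trans (pointGraph_reachable_of_incident hc hadj)⟩

theorem IsGenPolygon.pointGraph_connected {n s t : ℕ} (h : IsGenPolygon I n s t) :
    (pointGraph I).Connected := by
  have := h.pts_nonempty
  have hinc := (incidenceGraph I).preconnected_of_ediam_ne_top (by simp [h.ediam_eq])
  exact ⟨fun a b => pointGraph_reachable_of_incidenceGraph_reachable (hinc _ _)⟩

theorem IsGenPolygon.exists_incident {n s t : ℕ} (h : IsGenPolygon I n s t) (l : L) :
    ∃ p, I p l :=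
  Set.nonempty_of_ncard_ne_zero (s := {p | I p l}) (by rw [h.line_card l]; exact s.succ_ne_zero)

theorem distPL_le_dist {x y : P} {l : L} (hy : I y l) : distPL I x l ≤ (pointGraph I).dist x y :=
  Nat.sInf_le ⟨y, hy, rfl⟩

end Geometry

theorem distance_ovoid_iff_exact_cover_odd_general {P L : Type*} {I : P → L → Prop}
    {d j s t : ℕ} (hpoly : IsGenPolygon I (2 * d) s t)
    (hjo : Odd j) (O : Set P) :
    IsDistanceOvoid I j O ↔
      ∀ p : P, ∃! x : P, x ∈ O ∧ (pointGraph I).dist x p ≤ (j - 1) / 2 := by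
  obtain ⟨m, rfl⟩ := hjo
  rw [show (2 * m + 1 - 1) / 2 = m by omega,
    ← hpoly.pointGraph_connected.packing_and_covering_iff_existsUnique, IsDistanceOvoid]
  refine ⟨fun ⟨hpack, hcover, _⟩ => ⟨hpack, hcover⟩,
    fun ⟨hpack, hcover⟩ => ⟨hpack, hcover, fun l => ?_⟩⟩
  obtain ⟨y, hy⟩ := hpoly.exists_incident l
  obtain ⟨x, hxO, hyx⟩ := hcover y
  have hxl := distPL_le_dist (x := x) hy
  rw [dist_comm] at hyx
  exact ⟨x, hxO, by omega⟩

/-- For odd `j`, a set `O` of points of a generalized `2d`-gon is a distance-`j` ovoid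
iff every point is at point-graph distance at most `(j-1)/2` from exactly one point of `O`. -/
theorem distance_ovoid_iff_exact_cover_odd {P L : Type*} {I : P → L → Prop}
    {d j s t : ℕ} (hs : 1 ≤ s) (ht : 1 ≤ t) (hpoly : IsGenPolygon I (2 * d) s t)
    (hj2 : 2 ≤ j) (hjd : j ≤ d) (hjo : Odd j) (O : Set P) :
    IsDistanceOvoid I j O ↔
      ∀ p : P, ∃! x : P, x ∈ O ∧ (pointGraph I).dist x p ≤ (j - 1) / 2 :=
  distance_ovoid_iff_exact_cover_odd_general hpoly hjo O
end

section
/- Let H = (P, L, I) be a finite generalized hexagon of order (s,t) with s, t ≥ 1, let H' = (P', L') be a subhexagon of H of order (s, t') with t' ≥ 1, and let O be a distance-2 ovoid of H. Then O ∩ P' is a distance-2 ovoid of H', and |O ∩ P'| = s²t'² + st' + 1. -/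
open SimpleGraph
/-!
Every line of the subhexagon carries exactly one point of `O`, and that point lies in `P'` because
the subhexagon contains all points of its lines. Counting the incident pairs (point of `O ∩ P'`,
line of `L'`) in two ways gives `|O ∩ P'| (t' + 1) = |L'|`. A generalized hexagon of order
`(s, t')` has `(t' + 1)(s²t'² + st' + 1)` lines: sort the vertices of its incidence graph by their
distance from a fixed line; as the girth is `12`, up to distance `5` every vertex has a unique
neighbour one step closer, and the layer sizes follow by double counting between layers.
-/

namespace SimpleGraph

variable {V : Type*} {G : SimpleGraph V} {r u u' v w : V}

theorem Coloring.even_dist_iff (c : G.Coloring Bool) (h : G.Reachable u v) :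
    Even (G.dist u v) ↔ (c u ↔ c v) := by
  obtain ⟨p, hp⟩ := h.exists_walk_length_eq_dist
  rw [← hp, c.even_length_iff_congr p]

theorem Coloring.dist_eq_add_one_or_of_adj (c : G.Coloring Bool) (hr : G.Reachable r v)
    (h : G.Adj v w) : G.dist r w = G.dist r v + 1 ∨ G.dist r v = G.dist r w + 1 := by
  have hv := c.even_dist_iff hr
  have hw := c.even_dist_iff (hr.trans h.reachable)
  have hvw : c v ≠ c w := c.valid h
  have hne : G.dist r v ≠ G.dist r w := fun he => by
    rw [he, hw] at hv
    cases hcv : c v <;> cases hcw : c w <;> simp_all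
  rcases h.diff_dist_adj (u := r) with h' | h' | h' <;> omega

theorem Reachable.exists_adj_dist_add_one_eq (hr : G.Reachable r v) (hv : r ≠ v) :
    ∃ u, G.Adj u v ∧ G.dist r u + 1 = G.dist r v := by
  obtain ⟨p, hp⟩ := hr.exists_walk_length_eq_dist
  have hnil : ¬p.Nil := fun h => hv h.eq
  refine ⟨p.penultimate, p.adj_penultimate hnil, le_antisymm ?_ ?_⟩
  · rw [← hp, ← p.length_dropLast_add_one hnil]
    exact Nat.add_le_add_right (dist_le _) 1
  · have := (p.adj_penultimate hnil).reachable.dist_triangle_right r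
    rwa [dist_eq_one_iff_adj.mpr (p.adj_penultimate hnil)] at this

/-- Two neighbours of `v` joined by a path avoiding `v` close up a cycle through `v`. -/
theorem egirth_le_length_add_two {Q : G.Walk u u'} (hQ : Q.IsPath) (hv : v ∉ Q.support)
    (hu : G.Adj u v) (hu' : G.Adj u' v) (hne : u ≠ u') : G.egirth ≤ Q.length + 2 := by
  have hcycle : (Walk.cons hu' (Walk.cons hu.symm Q)).IsCycle := by
    refine (Walk.cons_isCycle_iff _ _).mpr ⟨(Walk.cons_isPath_iff _ _).mpr ⟨hQ, hv⟩, ?_⟩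
    intro he
    rcases List.mem_cons.mp he with he | he
    · rcases Sym2.eq_iff.mp he with ⟨h1, -⟩ | ⟨h1, -⟩
      · exact hu'.ne h1
      · exact hne h1.symm
    · exact hv (Walk.snd_mem_support_of_mem_edges Q he)
  simpa [add_assoc] using egirth_le_length hcycle

theorem eq_of_adj_of_dist_add_one_eq (hru : G.Reachable r u) (hru' : G.Reachable r u')
    (hu : G.Adj u v) (hu' : G.Adj u' v) (hd : G.dist r u + 1 = G.dist r v)
    (hd' : G.dist r u' + 1 = G.dist r v) (hg : (2 * G.dist r v : ℕ∞) < G.egirth) : u = u' := by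
  classical
  by_contra hne
  obtain ⟨p, -, hp⟩ := hru.exists_path_of_dist
  obtain ⟨p', -, hp'⟩ := hru'.exists_path_of_dist
  have avoid : ∀ {x} (q : G.Walk r x), q.length + 1 = G.dist r v → v ∉ q.support := by
    intro x q hq hvq
    have := (dist_le (q.takeUntil v hvq)).trans (q.length_takeUntil_le_length hvq)
    omega
  have hW := (p.reverse.append p').bypass_isPath
  have hvW : v ∉ (p.reverse.append p').bypass.support := fun hv => by
    have := Walk.support_bypass_subset_support _ hv
    rw [Walk.support_append, Walk.support_reverse] at this
    rcases List.mem_append.mp this with h | h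
    · exact avoid p (by omega) (List.mem_reverse.mp h)
    · exact avoid p' (by omega) (List.mem_of_mem_tail h)
  have hlen := (p.reverse.append p').length_bypass_le_length
  rw [Walk.length_append, Walk.length_reverse] at hlen
  refine hg.not_ge ((egirth_le_length_add_two hW hvW hu hu' hne).trans ?_)
  norm_cast
  omega

section Sphere

open Finset

variable [Fintype V]

noncomputable def distSphere (G : SimpleGraph V) (r : V) (k : ℕ) : Finset V :=
  {v | G.dist r v = k}

@[simp]
theorem mem_distSphere {k : ℕ} : v ∈ G.distSphere r k ↔ G.dist r v = k := by
  simp [distSphere]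

theorem Connected.distSphere_zero (hG : G.Connected) : G.distSphere r 0 = {r} := by
  ext v
  rw [mem_distSphere, hG.dist_eq_zero_iff, Finset.mem_singleton, eq_comm]

variable [DecidableRel G.Adj]

theorem distSphere_one : G.distSphere r 1 = G.neighborFinset r := by
  ext v
  rw [mem_distSphere, dist_eq_one_iff_adj, mem_neighborFinset]

variable {k : ℕ}

theorem Connected.card_bipartiteBelow_distSphere (hG : G.Connected)
    (hv : v ∈ G.distSphere r (k + 1)) (hg : (2 * (k + 1) : ℕ∞) < G.egirth) :
    #((G.distSphere r k).bipartiteBelow G.Adj v) = 1 := by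
  rw [mem_distSphere] at hv
  obtain ⟨u, hu, hdu⟩ := (hG r v).exists_adj_dist_add_one_eq (by rintro rfl; simp at hv)
  rw [card_eq_one]
  refine ⟨u, ext fun u' => ?_⟩
  simp only [mem_bipartiteBelow, mem_distSphere, mem_singleton]
  constructor
  · rintro ⟨hdu', hu'⟩
    exact eq_of_adj_of_dist_add_one_eq (hG r u') (hG r u) hu' hu (by omega) (by omega)
      (by rw [hv]; exact_mod_cast hg)
  · rintro rfl
    exact ⟨by omega, hu⟩

theorem Connected.degree_eq_card_bipartiteBelow_add_card_bipartiteAbove (hG : G.Connected)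
    (c : G.Coloring Bool) (hv : v ∈ G.distSphere r (k + 1)) :
    G.degree v = #((G.distSphere r k).bipartiteBelow G.Adj v) +
      #((G.distSphere r (k + 2)).bipartiteAbove G.Adj v) := by
  classical
  rw [mem_distSphere] at hv
  rw [← card_neighborFinset_eq_degree, ← card_union_of_disjoint]
  · congr 1
    ext u
    simp only [mem_neighborFinset, mem_union, mem_bipartiteBelow, mem_bipartiteAbove,
      mem_distSphere, G.adj_comm u v]
    constructor
    · intro h
      rcases c.dist_eq_add_one_or_of_adj (hG r v) h with h' | h'
      · exact .inr ⟨by omega, h⟩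
      · exact .inl ⟨by omega, h⟩
    · rintro (⟨-, h⟩ | ⟨-, h⟩) <;> exact h
  · rw [Finset.disjoint_left]
    intro u h h'
    simp only [mem_bipartiteBelow, mem_bipartiteAbove, mem_distSphere] at h h'
    omega

theorem Connected.card_distSphere_mul_eq (hG : G.Connected) (c : G.Coloring Bool)
    (hg : (2 * (k + 1) : ℕ∞) < G.egirth) {d n : ℕ}
    (hd : ∀ v ∈ G.distSphere r (k + 1), G.degree v = d)
    (hn : ∀ v ∈ G.distSphere r (k + 2),
      #((G.distSphere r (k + 1)).bipartiteBelow G.Adj v) = n) :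
    #(G.distSphere r (k + 1)) * (d - 1) = #(G.distSphere r (k + 2)) * n := by
  refine card_mul_eq_card_mul G.Adj (fun v hv => ?_) hn
  have := hG.degree_eq_card_bipartiteBelow_add_card_bipartiteAbove c hv
  rw [hG.card_bipartiteBelow_distSphere hv hg, hd v hv] at this
  omega

/-- The spheres about `r` have sizes `1, s + 1, (s + 1)t, (s + 1)st, (s + 1)st², (s + 1)s²t²`
up to radius `5`, where the girth leaves every vertex a unique neighbour one step closer to `r`,
and `s²t³` at radius `6`, where all neighbours lie one step closer. -/
theorem Connected.sum_card_distSphere_even_of_twelve_le_egirth (hG : G.Connected)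
    (c : G.Coloring Bool) {s t : ℕ} (hg : 12 ≤ G.egirth) (hdiam : ∀ v, G.dist r v ≤ 6)
    (hdeg : ∀ k, ∀ v ∈ G.distSphere r k, G.degree v = if Even k then s + 1 else t + 1) :
    #(G.distSphere r 0) + #(G.distSphere r 2) + #(G.distSphere r 4) + #(G.distSphere r 6) =
      (t + 1) * (s ^ 2 * t ^ 2 + s * t + 1) := by
  set S := G.distSphere r
  have step : ∀ k, k + 2 ≤ 5 →
      #(S (k + 1)) * ((if Even (k + 1) then s + 1 else t + 1) - 1) = #(S (k + 2)) := by
    intro k hk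
    have := hG.card_distSphere_mul_eq c (lt_of_lt_of_le (by norm_cast; omega) hg) (hdeg (k + 1))
      (fun v hv => hG.card_bipartiteBelow_distSphere hv (lt_of_lt_of_le (by norm_cast; omega) hg))
    rwa [mul_one] at this
  have top : #(S 5) * t = #(S 6) * (s + 1) := by
    refine hG.card_distSphere_mul_eq c (k := 4) (lt_of_lt_of_le (by norm_cast) hg) (hdeg 5)
      fun v hv => ?_
    have hv' := hG.degree_eq_card_bipartiteBelow_add_card_bipartiteAbove c hv
    have : (S 7).bipartiteAbove G.Adj v = ∅ :=
      eq_empty_of_forall_notMem fun u hu => by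
        have := hdiam u
        rw [mem_bipartiteAbove, mem_distSphere] at hu
        omega
    rw [this, card_empty, hdeg 6 v hv, if_pos (by decide)] at hv'
    exact hv'.symm
  have h0 : #(S 0) = 1 := by simp only [S, hG.distSphere_zero, card_singleton]
  have h1 : #(S 1) = s + 1 := by
    simpa [S, distSphere_one, card_neighborFinset_eq_degree, h0] using hdeg 0 r (by simp [S])
  have h2 := step 0 (by norm_num)
  have h3 := step 1 (by norm_num)
  have h4 := step 2 (by norm_num)
  have h5 := step 3 (by norm_num)
  norm_num at h2 h3 h4 h5
  have h6 : #(S 6) = s ^ 2 * t ^ 3 := by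
    refine Nat.eq_of_mul_eq_mul_right (show 0 < s + 1 by omega) ?_
    rw [← top, ← h5, ← h4, ← h3, ← h2, h1]
    ring
  rw [h0, ← h4, ← h3, ← h2, h6, h1]
  ring

end Sphere

end SimpleGraph

section IncidenceGraph

open SimpleGraph Finset

variable {A B : Type*} {J : A → B → Prop}

def incidenceGraphColoring (J : A → B → Prop) : (incidenceGraph J).Coloring Bool :=
  Coloring.mk Sum.isLeft fun {x y} h => by
    cases x <;> cases y <;> simp_all [incidenceGraph, IncAdj]

@[simp]
theorem incidenceGraphColoring_apply (v : A ⊕ B) : incidenceGraphColoring J v = v.isLeft :=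
  rfl

theorem even_dist_inr_iff {b : B} {v : A ⊕ B} (h : (incidenceGraph J).Reachable (.inr b) v) :
    Even ((incidenceGraph J).dist (.inr b) v) ↔ v.isRight := by
  rw [(incidenceGraphColoring J).even_dist_iff h]
  cases v <;> simp

theorem incidenceGraph_degree_inl (a : A)
    [Fintype ((incidenceGraph J).neighborSet (.inl a))] :
    (incidenceGraph J).degree (.inl a) = {b | J a b}.ncard := by
  have : (incidenceGraph J).neighborSet (.inl a) = Sum.inr '' {b | J a b} := by
    ext v
    cases v <;> simp [incidenceGraph, IncAdj]
  rw [← card_neighborSet_eq_degree, ← Nat.card_eq_fintype_card, Nat.card_coe_set_eq, this,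
    Set.ncard_image_of_injective _ Sum.inr_injective]

theorem incidenceGraph_degree_inr (b : B)
    [Fintype ((incidenceGraph J).neighborSet (.inr b))] :
    (incidenceGraph J).degree (.inr b) = {a | J a b}.ncard := by
  have : (incidenceGraph J).neighborSet (.inr b) = Sum.inl '' {a | J a b} := by
    ext v
    cases v <;> simp [incidenceGraph, IncAdj]
  rw [← card_neighborSet_eq_degree, ← Nat.card_eq_fintype_card, Nat.card_coe_set_eq, this,
    Set.ncard_image_of_injective _ Sum.inl_injective]

end IncidenceGraph

namespace IsGenPolygon

open SimpleGraph Finset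

variable {A B : Type*} {J : A → B → Prop} {n s t : ℕ}

theorem connected (h : IsGenPolygon J n s t) : (incidenceGraph J).Connected :=
  have := h.pts_nonempty
  connected_of_ediam_ne_top (by rw [h.ediam_eq]; exact ENat.natCast_ne_top n)

theorem dist_le (h : IsGenPolygon J n s t) (u v : A ⊕ B) : (incidenceGraph J).dist u v ≤ n := by
  have hdiam : (incidenceGraph J).diam = n := by simp [diam, h.ediam_eq]
  exact hdiam ▸ dist_le_diam (by rw [h.ediam_eq]; exact ENat.natCast_ne_top n)

theorem degree_inl (h : IsGenPolygon J n s t) (a : A)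
    [Fintype ((incidenceGraph J).neighborSet (.inl a))] :
    (incidenceGraph J).degree (.inl a) = t + 1 := by
  rw [incidenceGraph_degree_inl, h.point_card]

theorem degree_inr (h : IsGenPolygon J n s t) (b : B)
    [Fintype ((incidenceGraph J).neighborSet (.inr b))] :
    (incidenceGraph J).degree (.inr b) = s + 1 := by
  rw [incidenceGraph_degree_inr, h.line_card]

theorem degree_eq_of_mem_distSphere [Fintype A] [Fintype B]
    [DecidableRel (incidenceGraph J).Adj] (h : IsGenPolygon J n s t) {b : B} {k : ℕ} {v : A ⊕ B}
    (hv : v ∈ (incidenceGraph J).distSphere (.inr b) k) :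
    (incidenceGraph J).degree v = if Even k then s + 1 else t + 1 := by
  rw [mem_distSphere] at hv
  have := hv ▸ even_dist_inr_iff (h.connected (.inr b) v)
  cases v with
  | inl a => simp_all [h.degree_inl]
  | inr b => simp_all [h.degree_inr]

theorem card_lines_eq_sum_distSphere [Fintype A] [Fintype B] (h : IsGenPolygon J n s t) (b : B) :
    Fintype.card B =
      ∑ k ∈ range (n + 1) with Even k, #((incidenceGraph J).distSphere (.inr b) k) := by
  classical
  rw [← card_univ, ← card_map (Function.Embedding.inr),
    card_eq_sum_card_fiberwise (f := (incidenceGraph J).dist (.inr b))]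
  · refine sum_congr rfl fun k hk => congr_arg card (ext fun v => ?_)
    have hpar := even_dist_inr_iff (h.connected (.inr b) v)
    rw [mem_filter] at hk
    simp only [mem_filter, mem_map, mem_univ, true_and, Function.Embedding.inr_apply,
      mem_distSphere]
    refine ⟨fun hv => hv.2, fun hd => ⟨?_, hd⟩⟩
    have := hpar.mp (hd ▸ hk.2)
    cases v <;> simp_all
  · intro v hv
    obtain ⟨b', -, rfl⟩ := mem_map.mp hv
    rw [mem_coe, mem_filter, mem_range]
    exact ⟨Nat.lt_succ_of_le (h.dist_le _ _),
      (even_dist_inr_iff (h.connected (.inr b) (.inr b'))).mpr rfl⟩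

theorem card_lines_of_hexagon [Finite A] [Finite B] (h : IsGenPolygon J 6 s t) :
    Nat.card B = (t + 1) * (s ^ 2 * t ^ 2 + s * t + 1) := by
  classical
  have := Fintype.ofFinite A
  have := Fintype.ofFinite B
  obtain ⟨a₀⟩ := h.pts_nonempty
  obtain ⟨b₀, -⟩ : {b | J a₀ b}.Nonempty :=
    Set.nonempty_of_ncard_ne_zero (by rw [h.point_card a₀]; omega)
  rw [Nat.card_eq_fintype_card, h.card_lines_eq_sum_distSphere b₀, sum_filter]
  simp only [sum_range_succ, sum_range_zero]
  rw [← h.connected.sum_card_distSphere_even_of_twelve_le_egirth (incidenceGraphColoring J)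
    h.egirth_eq.ge (h.dist_le (.inr b₀)) fun k v hv => h.degree_eq_of_mem_distSphere hv]
  simp [Nat.even_iff]

end IsGenPolygon

theorem ncard_mul_eq_card_lines {P L : Type*} [Finite P] [Finite L] {I : P → L → Prop} {t : ℕ}
    (hpt : ∀ p, {l | I p l}.ncard = t + 1) {O : Set P} (hO : ∀ l, ∃! p, p ∈ O ∧ I p l) :
    O.ncard * (t + 1) = Nat.card L := by
  classical
  have := Fintype.ofFinite P
  have := Fintype.ofFinite L
  rw [Set.ncard_eq_toFinset_card', Nat.card_eq_fintype_card, ← Finset.card_univ,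
    ← mul_one (Finset.univ : Finset L).card]
  refine Finset.card_mul_eq_card_mul I (fun p _ => ?_) fun l _ => ?_
  · rw [← hpt p, Set.ncard_eq_toFinset_card']
    congr 1
    ext l
    simp [Finset.bipartiteAbove]
  · obtain ⟨p, hp, hpu⟩ := hO l
    rw [Finset.card_eq_one]
    exact ⟨p, Finset.ext fun q => by simpa using ⟨fun hq => hpu q hq, fun hq => hq ▸ hp⟩⟩

theorem distance_two_ovoid_inter_subhexagon_general {P L : Type*} [Fintype P] [Fintype L]
    {I : P → L → Prop} {s t' : ℕ} {P' : Set P} {L' : Set L}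
    (hsub : IsSubhexagon I s t' P' L') (O : Set P)
    (hO : ∀ l : L, ∃! p : P, p ∈ O ∧ I p l) :
    (∀ l : L', ∃! p : P', (p : P) ∈ O ∧ I (p : P) (l : L)) ∧
    (O ∩ P').ncard = s ^ 2 * t' ^ 2 + s * t' + 1 := by
  obtain ⟨hclosed, hhex'⟩ := hsub
  have hO' : ∀ l : L', ∃! p : P', (p : P) ∈ O ∧ I (p : P) (l : L) := by
    intro l
    obtain ⟨p, hp, hpu⟩ := hO l
    exact ⟨⟨p, hclosed p l l.2 hp.2⟩, hp, fun q hq => Subtype.ext (hpu q hq)⟩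
  refine ⟨hO', ?_⟩
  have hcount := ncard_mul_eq_card_lines hhex'.point_card (O := Subtype.val ⁻¹' O) hO'
  rw [hhex'.card_lines_of_hexagon, ← Set.ncard_image_of_injective _ Subtype.val_injective,
    Subtype.image_preimage_coe, Set.inter_comm, mul_comm (t' + 1)] at hcount
  exact Nat.eq_of_mul_eq_mul_right t'.succ_pos hcount

/-- A distance-2 ovoid `O` of a finite generalized hexagon of order `(s, t)` intersects
any subhexagon of order `(s, t')` in a distance-2 ovoid of the subhexagon,
of size `s²t'² + st' + 1`. -/
theorem distance_two_ovoid_inter_subhexagon {P L : Type*} [Fintype P] [Fintype L]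
    {I : P → L → Prop} {s t t' : ℕ} (hs : 1 ≤ s) (ht : 1 ≤ t) (ht' : 1 ≤ t')
    (hhex : IsGenPolygon I 6 s t) {P' : Set P} {L' : Set L}
    (hsub : IsSubhexagon I s t' P' L') (O : Set P)
    (hO : ∀ l : L, ∃! p : P, p ∈ O ∧ I p l) :
    (∀ l : L', ∃! p : P', (p : P) ∈ O ∧ I (p : P) (l : L)) ∧
    (O ∩ P').ncard = s ^ 2 * t' ^ 2 + s * t' + 1 :=
  distance_two_ovoid_inter_subhexagon_general hsub O hO
end
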